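/- The total variation distance between the Pauli characteristic distributions of two pure states is bounded by their trace distance: for n-qubit pure states ψ and φ, TV(Ξ_ψ, Ξ_φ) ≤ (1/2)‖ψ^{⊗2} − φ^{⊗2}‖₁ ≤ ‖ψ − φ‖₁. -/

import Mathlib

open scoped BigOperators
open ComplexConjugate
open scoped ComplexOrder

noncomputable def traceNorm {ι : Type*} [Fintype ι] [DecidableEq ι] (A : Matrix ι ι ℂ) : ℝ :=
  (((Matrix.posSemidef_conjTranspose_mul_self A).1.eigenvectorUnitary.1 *
      Matrix.diagonal (((↑) : ℝ → ℂ) ∘ Real.sqrt ∘ (Matrix.posSemidef_conjTranspose_mul_self A).1.eigenvalues) *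
      (star (Matrix.posSemidef_conjTranspose_mul_self A).1.eigenvectorUnitary : Matrix ι ι ℂ)).trace).re

noncomputable def proj {ι : Type*} (v : ι → ℂ) : Matrix ι ι ℂ :=
  Matrix.of fun i j => v i * conj (v j)

noncomputable def tensorPow {ι : Type*} (A : Matrix ι ι ℂ) (t : ℕ) :
    Matrix (Fin t → ι) (Fin t → ι) ℂ :=
  Matrix.of fun x y => ∏ i, A (x i) (y i)

noncomputable def pauli {n : ℕ} (a b : Fin n → ZMod 2) :
    Matrix (Fin n → ZMod 2) (Fin n → ZMod 2) ℂ :=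
  Matrix.of fun x y =>
    if x = y + a then
      Complex.I ^ (∑ i, (a i * b i).val) * (-1 : ℂ) ^ (∑ i, (b i * y i).val)
    else 0

noncomputable def xi {n : ℕ} (ρ : Matrix (Fin n → ZMod 2) (Fin n → ZMod 2) ℂ)
    (p : (Fin n → ZMod 2) × (Fin n → ZMod 2)) : ℝ :=
  Complex.normSq ((pauli p.1 p.2 * ρ).trace) / 2 ^ n

/-- Total variation distance between the Pauli characteristic distributions. -/
noncomputable def tvXi {n : ℕ} (ρ σ : Matrix (Fin n → ZMod 2) (Fin n → ZMod 2) ℂ) : ℝ :=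
  (1 / 2) * ∑ p : (Fin n → ZMod 2) × (Fin n → ZMod 2), |xi ρ p - xi σ p|

/-!
Put `t = ‖⟪u, v⟫‖²`. For unit vectors the difference `A = |u⟩⟨u| - |v⟩⟨v|` satisfies
`A⁴ = (1 - t) A²` and `tr A² = 2 (1 - t)`, so `(1 - t)^(-1/2) A²` is the square root of `Aᴴ A`
and `‖A‖₁ = 2 √(1 - t)`. The tensor squares are again rank-one projectors, with overlap `t²`,
so `½ ‖ψ^{⊗2} - φ^{⊗2}‖₁ = √(1 - t²) ≤ 2 √(1 - t)`.

For the first inequality, the Pauli matrices are orthogonal for the Hilbert–Schmidt product, each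
of squared norm `d = 2ⁿ`, so the vectors `P ↦ tr (P ψ)` have squared norm `d` and inner product
`d t`. Writing `|a² - b²| = |a - b| (a + b)` for `a = |tr (P ψ)|`, `b = |tr (P φ)|`,
Cauchy–Schwarz bounds `Σ |a² - b²|` by `√((2d - 2S)(2d + 2S))` with `S = Σ a b ≥ d t`, i.e. the
TV distance by `√(1 - t²)`.
-/

open Matrix

section TraceNorm

variable {ι : Type*} [Fintype ι] [DecidableEq ι]

open scoped MatrixOrder in
lemma traceNorm_eq_re_trace_of_mul_self {A B : Matrix ι ι ℂ} (hB : B.PosSemidef)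
    (h : B * B = Aᴴ * A) : traceNorm A = B.trace.re := by
  have hAA := posSemidef_conjTranspose_mul_self A
  have : traceNorm A = (cfc Real.sqrt (Aᴴ * A)).trace.re := by
    rw [hAA.1.cfc_eq, IsHermitian.cfc, Unitary.conjStarAlgAut_apply]; rfl
  rw [this, ← cfcₙ_eq_cfc, ← CFC.sqrt_eq_real_sqrt _ hAA.nonneg, CFC.sqrt_unique h hB.nonneg]

/-- `s⁻¹ • (A * A)` is the positive square root of `Aᴴ * A`; for `s = 0` both sides vanish. -/
lemma traceNorm_eq_of_mul_self_mul_self {A : Matrix ι ι ℂ} (hA : A.IsHermitian) {s : ℝ}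
    (hs : 0 ≤ s) (h : (A * A) * (A * A) = ((s ^ 2 : ℝ) : ℂ) • (A * A)) :
    traceNorm A = s⁻¹ * (A * A).trace.re := by
  have hAA : Aᴴ * A = A * A := by rw [hA.eq]
  have hB : (((s⁻¹ : ℝ) : ℂ) • (A * A)).PosSemidef :=
    (hAA ▸ posSemidef_conjTranspose_mul_self A).smul
      (Complex.zero_le_real.mpr (inv_nonneg.mpr hs))
  rw [traceNorm_eq_re_trace_of_mul_self hB, trace_smul, smul_eq_mul, Complex.re_ofReal_mul]
  rw [hAA, smul_mul_smul_comm, h, smul_smul, ← Complex.ofReal_mul, ← Complex.ofReal_mul]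
  rcases hs.eq_or_lt with rfl | hs
  · have hAA0 : (A * A)ᴴ * (A * A) = 0 := by
      simpa [hA.eq, mul_assoc] using h
    simp [conjTranspose_mul_self_eq_zero.mp hAA0]
  · field_simp
    simp

end TraceNorm

section RankOne

lemma proj_eq_vecMulVec {ι : Type*} (u : ι → ℂ) : proj u = vecMulVec u (star u) := rfl

variable {ι : Type*} [Fintype ι]

lemma isHermitian_proj (u : ι → ℂ) : (proj u).IsHermitian :=
  (posSemidef_vecMulVec_self_star u).isHermitian

lemma vecMulVec_star_mul_vecMulVec_star (x y z w : ι → ℂ) :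
    vecMulVec x (star y) * vecMulVec z (star w) = (star y ⬝ᵥ z) • vecMulVec x (star w) := by
  rw [vecMulVec_mul_vecMulVec, vecMulVec_smul]

lemma star_dotProduct_mul_star_dotProduct (u v : ι → ℂ) :
    (star u ⬝ᵥ v) * (star v ⬝ᵥ u) = (‖star u ⬝ᵥ v‖ : ℂ) ^ 2 := by
  rw [star_dotProduct v u, Complex.star_def, Complex.mul_conj']

lemma norm_star_dotProduct_le_one {u v : ι → ℂ} (hu : star u ⬝ᵥ u = 1)
    (hv : star v ⬝ᵥ v = 1) : ‖star u ⬝ᵥ v‖ ≤ 1 := by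
  have hnorm : ∀ w : ι → ℂ, star w ⬝ᵥ w = 1 → ‖WithLp.toLp 2 w‖ = 1 := fun w hw => by
    rw [norm_eq_sqrt_re_inner (𝕜 := ℂ), EuclideanSpace.inner_toLp_toLp, dotProduct_comm, hw,
      RCLike.one_re, Real.sqrt_one]
  simpa [EuclideanSpace.inner_toLp_toLp, dotProduct_comm, hnorm u hu, hnorm v hv] using
    norm_inner_le_norm (𝕜 := ℂ) (WithLp.toLp 2 u) (WithLp.toLp 2 v)

lemma trace_proj_mul_proj (u v : ι → ℂ) :
    (proj u * proj v).trace = (‖star u ⬝ᵥ v‖ : ℂ) ^ 2 := by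
  rw [proj_eq_vecMulVec, proj_eq_vecMulVec, vecMulVec_star_mul_vecMulVec_star, trace_smul,
    trace_vecMulVec, dotProduct_comm u (star v), smul_eq_mul, star_dotProduct_mul_star_dotProduct]

variable {u v : ι → ℂ}

lemma proj_sub_proj_mul_self (hu : star u ⬝ᵥ u = 1) (hv : star v ⬝ᵥ v = 1) :
    (proj u - proj v) * (proj u - proj v) = proj u + proj v
      - ((star u ⬝ᵥ v) • vecMulVec u (star v) + (star v ⬝ᵥ u) • vecMulVec v (star u)) := by
  simp only [proj_eq_vecMulVec, sub_mul, mul_sub, vecMulVec_star_mul_vecMulVec_star, hu, hv,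
    one_smul]
  module

lemma proj_sub_proj_pow_four (hu : star u ⬝ᵥ u = 1) (hv : star v ⬝ᵥ v = 1) :
    ((proj u - proj v) * (proj u - proj v)) * ((proj u - proj v) * (proj u - proj v))
      = ((1 - ‖star u ⬝ᵥ v‖ ^ 2 : ℝ) : ℂ) • ((proj u - proj v) * (proj u - proj v)) := by
  rw [proj_sub_proj_mul_self hu hv]
  simp only [proj_eq_vecMulVec, sub_mul, mul_sub, add_mul, mul_add, smul_mul_assoc,
    mul_smul_comm, vecMulVec_star_mul_vecMulVec_star, hu, hv, one_smul, smul_smul]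
  push_cast
  rw [← star_dotProduct_mul_star_dotProduct]
  module

lemma trace_proj_sub_proj_mul_self (hu : star u ⬝ᵥ u = 1) (hv : star v ⬝ᵥ v = 1) :
    ((proj u - proj v) * (proj u - proj v)).trace = 2 * (1 - ‖star u ⬝ᵥ v‖ ^ 2 : ℝ) := by
  rw [proj_sub_proj_mul_self hu hv]
  simp only [proj_eq_vecMulVec, trace_sub, trace_add, trace_smul, trace_vecMulVec, smul_eq_mul]
  rw [dotProduct_comm u (star u), dotProduct_comm v (star v), dotProduct_comm u (star v),
    dotProduct_comm v (star u), hu, hv]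
  push_cast
  linear_combination (-2 : ℂ) * star_dotProduct_mul_star_dotProduct u v

theorem traceNorm_proj_sub_proj [DecidableEq ι] (hu : star u ⬝ᵥ u = 1) (hv : star v ⬝ᵥ v = 1) :
    traceNorm (proj u - proj v) = 2 * √(1 - ‖star u ⬝ᵥ v‖ ^ 2) := by
  have hle : ‖star u ⬝ᵥ v‖ ^ 2 ≤ 1 :=
    pow_le_one₀ (norm_nonneg _) (norm_star_dotProduct_le_one hu hv)
  suffices h : ∀ s : ℝ, 0 ≤ s → s ^ 2 = 1 - ‖star u ⬝ᵥ v‖ ^ 2 →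
      traceNorm (proj u - proj v) = 2 * s from
    h _ (Real.sqrt_nonneg _) (Real.sq_sqrt (by linarith))
  intro s hs0 hs
  rw [traceNorm_eq_of_mul_self_mul_self ((isHermitian_proj u).sub (isHermitian_proj v)) hs0
      (by rw [hs]; exact proj_sub_proj_pow_four hu hv),
    trace_proj_sub_proj_mul_self hu hv, ← hs, ← Complex.ofReal_ofNat, ← Complex.ofReal_mul,
    Complex.ofReal_re, mul_left_comm, sq, ← mul_assoc s⁻¹, inv_mul_mul_self]

end RankOne

section Tensor

def vecTensorPow {R ι : Type*} [CommMonoid R] (u : ι → R) (t : ℕ) : (Fin t → ι) → R :=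
  fun x => ∏ i, u (x i)

lemma tensorPow_proj {ι : Type*} (u : ι → ℂ) (t : ℕ) :
    tensorPow (proj u) t = proj (vecTensorPow u t) := by
  ext x y
  simp only [tensorPow, proj, vecTensorPow, of_apply, map_prod, Finset.prod_mul_distrib]

lemma star_vecTensorPow_dotProduct {R ι : Type*} [CommSemiring R] [StarRing R] [Fintype ι]
    (u v : ι → R) (t : ℕ) :
    star (vecTensorPow u t) ⬝ᵥ vecTensorPow v t = (star u ⬝ᵥ v) ^ t := by
  simp only [dotProduct, vecTensorPow, Pi.star_apply, star_prod, ← Finset.prod_mul_distrib]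
  rw [← Fintype.prod_sum (fun _ k => star (u k) * v k), Finset.prod_const, Finset.card_univ,
    Fintype.card_fin]

end Tensor

lemma trace_mul_eq_sum {ι : Type*} [Fintype ι] (A B : Matrix ι ι ℂ) :
    (A * B).trace = ∑ q : ι × ι, A q.1 q.2 * B q.2 q.1 := by
  simp only [trace, diag, mul_apply, Fintype.sum_prod_type]

lemma dotProduct_star_trace_mul_of_orthogonal {κ ι : Type*} [Fintype κ] [Fintype ι]
    [DecidableEq ι] (P : κ → Matrix ι ι ℂ) {c : ℂ}
    (hP : ∀ q r : ι × ι, ∑ k, P k q.1 q.2 * conj (P k r.1 r.2) = if q = r then c else 0)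
    (ρ σ : Matrix ι ι ℂ) :
    (fun k => (P k * ρ).trace) ⬝ᵥ star (fun k => (P k * σ).trace) = c * (σᴴ * ρ).trace := by
  calc (fun k => (P k * ρ).trace) ⬝ᵥ star (fun k => (P k * σ).trace)
      = ∑ r : ι × ι, ∑ q : ι × ι,
          (∑ k, P k q.1 q.2 * conj (P k r.1 r.2)) * (ρ q.2 q.1 * conj (σ r.2 r.1)) := by
        simp only [dotProduct, trace_mul_eq_sum, Pi.star_apply, star_sum, star_mul',
          Finset.sum_mul, Finset.mul_sum]
        rw [Finset.sum_comm]
        refine Finset.sum_congr rfl fun r _ => ?_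
        rw [Finset.sum_comm]
        refine Finset.sum_congr rfl fun q _ => Finset.sum_congr rfl fun k _ => ?_
        simp only [Complex.star_def]
        ring
    _ = ∑ q : ι × ι, c * (ρ q.2 q.1 * conj (σ q.2 q.1)) := by
        simp only [hP, ite_mul, zero_mul, Finset.sum_ite_eq', Finset.mem_univ, if_true]
    _ = c * (σᴴ * ρ).trace := by
        rw [← Finset.mul_sum, trace_mul_eq_sum]
        simp only [conjTranspose_apply, Complex.star_def, mul_comm (conj _)]

section Pauli

variable {n : ℕ}

lemma sum_neg_one_pow_val_mul_add_val_mul (c d : ZMod 2) :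
    ∑ β : ZMod 2, (-1 : ℂ) ^ ((β * c).val + (β * d).val) = if c = d then 2 else 0 := by
  rw [show (Finset.univ : Finset (ZMod 2)) = {0, 1} from rfl, Finset.sum_pair zero_ne_one]
  obtain rfl | rfl : c = 0 ∨ c = 1 := by decide +revert
  all_goals obtain rfl | rfl : d = 0 ∨ d = 1 := by decide +revert
  all_goals norm_num [ZMod.val_one]

lemma sum_neg_one_pow_mul_neg_one_pow (y w : Fin n → ZMod 2) :
    ∑ b : Fin n → ZMod 2, (-1 : ℂ) ^ (∑ i, (b i * y i).val) * (-1 : ℂ) ^ (∑ i, (b i * w i).val)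
      = if y = w then 2 ^ n else 0 := by
  simp only [← Finset.prod_pow_eq_pow_sum, ← Finset.prod_mul_distrib, ← pow_add]
  rw [← Fintype.prod_sum (fun i β => (-1 : ℂ) ^ ((β * y i).val + (β * w i).val))]
  simp only [sum_neg_one_pow_val_mul_add_val_mul, Finset.prod_ite_zero, Finset.prod_const,
    Finset.card_univ, Fintype.card_fin, Finset.mem_univ, true_implies, funext_iff]

lemma pauli_mul_conj_pauli (a b x y z w : Fin n → ZMod 2) :
    pauli a b x y * conj (pauli a b z w) = if x = y + a ∧ z = w + a then
      (-1 : ℂ) ^ (∑ i, (b i * y i).val) * (-1 : ℂ) ^ (∑ i, (b i * w i).val) else 0 := by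
  have hphase :
      Complex.I ^ (∑ i, (a i * b i).val) * conj (Complex.I ^ (∑ i, (a i * b i).val)) = 1 := by
    rw [Complex.mul_conj', norm_pow, Complex.norm_I, one_pow, Complex.ofReal_one, one_pow]
  simp only [pauli, of_apply]
  split_ifs <;> simp_all only [map_mul, map_pow, map_neg, map_one, mul_zero, zero_mul, map_zero,
    not_true, and_false, false_and, and_self]
  linear_combination
    ((-1 : ℂ) ^ (∑ i, (b i * y i).val) * (-1 : ℂ) ^ (∑ i, (b i * w i).val)) * hphase

lemma sum_pauli_mul_conj_pauli (q r : (Fin n → ZMod 2) × (Fin n → ZMod 2)) :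
    ∑ p : (Fin n → ZMod 2) × (Fin n → ZMod 2),
        pauli p.1 p.2 q.1 q.2 * conj (pauli p.1 p.2 r.1 r.2) = if q = r then 2 ^ n else 0 := by
  obtain ⟨x, y⟩ := q
  obtain ⟨z, w⟩ := r
  simp only [Fintype.sum_prod_type, pauli_mul_conj_pauli, Finset.sum_ite_irrel,
    Finset.sum_const_zero, sum_neg_one_pow_mul_neg_one_pow, ite_and]
  have hx : ∀ a, x = y + a ↔ a = x - y := fun a => by rw [eq_sub_iff_add_eq', eq_comm]
  simp only [hx, Finset.sum_ite_eq', Finset.mem_univ, if_true, Prod.mk.injEq]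
  by_cases hyw : y = w
  · simp [hyw, eq_comm]
  · simp [hyw]

noncomputable def pauliCoeff (ρ : Matrix (Fin n → ZMod 2) (Fin n → ZMod 2) ℂ)
    (p : (Fin n → ZMod 2) × (Fin n → ZMod 2)) : ℂ :=
  (pauli p.1 p.2 * ρ).trace

lemma pauliCoeff_dotProduct_star_pauliCoeff
    (ρ σ : Matrix (Fin n → ZMod 2) (Fin n → ZMod 2) ℂ) :
    pauliCoeff ρ ⬝ᵥ star (pauliCoeff σ) = 2 ^ n * (σᴴ * ρ).trace :=
  dotProduct_star_trace_mul_of_orthogonal _ sum_pauli_mul_conj_pauli ρ σ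

end Pauli

section PauliDistribution

lemma sq_sum_abs_sq_sub_sq_le {κ : Type*} [Fintype κ] (a b : κ → ℝ) :
    (∑ k, |a k ^ 2 - b k ^ 2|) ^ 2 ≤ (∑ k, (a k - b k) ^ 2) * ∑ k, (a k + b k) ^ 2 := by
  have h : ∀ k, |a k ^ 2 - b k ^ 2| = |a k - b k| * |a k + b k| := fun k => by
    rw [← abs_mul]; ring_nf
  simpa only [h, sq_abs] using
    Finset.sum_mul_sq_le_sq_mul_sq Finset.univ (fun k => |a k - b k|) (fun k => |a k + b k|)

lemma dotProduct_star_self_eq_sum_norm_sq {κ : Type*} [Fintype κ] (f : κ → ℂ) :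
    f ⬝ᵥ star f = ((∑ k, ‖f k‖ ^ 2 : ℝ) : ℂ) := by
  simp only [dotProduct, Pi.star_apply, Complex.star_def, Complex.mul_conj', Complex.ofReal_sum,
    Complex.ofReal_pow]

lemma sum_abs_norm_sq_sub_norm_sq_le {κ : Type*} [Fintype κ] {f g : κ → ℂ} {D : ℝ}
    (hf : f ⬝ᵥ star f = D) (hg : g ⬝ᵥ star g = D) :
    ∑ k, |‖f k‖ ^ 2 - ‖g k‖ ^ 2| ≤ 2 * √(D ^ 2 - ‖f ⬝ᵥ star g‖ ^ 2) := by
  rw [dotProduct_star_self_eq_sum_norm_sq, Complex.ofReal_inj] at hf hg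
  set S := ∑ k, ‖f k‖ * ‖g k‖
  have hS : ‖f ⬝ᵥ star g‖ ≤ S := (norm_sum_le _ _).trans_eq <| by
    simp only [Pi.star_apply, norm_mul, norm_star, S]
  have hminus : ∑ k, (‖f k‖ - ‖g k‖) ^ 2 = 2 * D - 2 * S := by
    simp only [sub_sq, Finset.sum_add_distrib, Finset.sum_sub_distrib, hf, hg, S,
      ← Finset.mul_sum, mul_assoc]
    ring
  have hplus : ∑ k, (‖f k‖ + ‖g k‖) ^ 2 = 2 * D + 2 * S := by
    simp only [add_sq, Finset.sum_add_distrib, hf, hg, S, ← Finset.mul_sum, mul_assoc]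
    ring
  have hCS := sq_sum_abs_sq_sub_sq_le (fun k => ‖f k‖) (fun k => ‖g k‖)
  rw [hminus, hplus] at hCS
  have hsq : ‖f ⬝ᵥ star g‖ ^ 2 ≤ S ^ 2 := pow_le_pow_left₀ (norm_nonneg _) hS 2
  have hhalf : (∑ k, |‖f k‖ ^ 2 - ‖g k‖ ^ 2|) / 2 ≤ √(D ^ 2 - ‖f ⬝ᵥ star g‖ ^ 2) :=
    Real.le_sqrt_of_sq_le (by nlinarith)
  linarith

variable {n : ℕ}

lemma tvXi_eq (ρ σ : Matrix (Fin n → ZMod 2) (Fin n → ZMod 2) ℂ) :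
    tvXi ρ σ = (2 * 2 ^ n)⁻¹ * ∑ p, |‖pauliCoeff ρ p‖ ^ 2 - ‖pauliCoeff σ p‖ ^ 2| := by
  simp only [tvXi, xi, pauliCoeff, Complex.normSq_eq_norm_sq, ← sub_div, abs_div,
    abs_of_pos (by positivity : (0 : ℝ) < 2 ^ n), ← Finset.sum_div]
  field_simp

lemma pauliCoeff_proj_dotProduct_star (u v : (Fin n → ZMod 2) → ℂ) :
    pauliCoeff (proj u) ⬝ᵥ star (pauliCoeff (proj v))
      = ((2 ^ n * ‖star u ⬝ᵥ v‖ ^ 2 : ℝ) : ℂ) := by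
  rw [pauliCoeff_dotProduct_star_pauliCoeff, (isHermitian_proj v).eq, trace_mul_comm,
    trace_proj_mul_proj]
  push_cast
  ring

theorem tvXi_proj_le {u v : (Fin n → ZMod 2) → ℂ} (hu : star u ⬝ᵥ u = 1)
    (hv : star v ⬝ᵥ v = 1) : tvXi (proj u) (proj v) ≤ √(1 - (‖star u ⬝ᵥ v‖ ^ 2) ^ 2) := by
  have hd : (0 : ℝ) < 2 ^ n := by positivity
  have hunit : ∀ w, star w ⬝ᵥ w = 1 →
      pauliCoeff (proj w) ⬝ᵥ star (pauliCoeff (proj w)) = ((2 ^ n : ℝ) : ℂ) := fun w hw => by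
    rw [pauliCoeff_proj_dotProduct_star, hw, norm_one, one_pow, mul_one]
  have hbound := sum_abs_norm_sq_sub_norm_sq_le (hunit u hu) (hunit v hv)
  rw [pauliCoeff_proj_dotProduct_star, Complex.norm_real, Real.norm_of_nonneg (by positivity),
    show (2 ^ n : ℝ) ^ 2 - (2 ^ n * ‖star u ⬝ᵥ v‖ ^ 2) ^ 2
      = (2 ^ n) ^ 2 * (1 - (‖star u ⬝ᵥ v‖ ^ 2) ^ 2) by ring,
    Real.sqrt_mul (by positivity), Real.sqrt_sq hd.le] at hbound
  rw [tvXi_eq]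
  calc (2 * 2 ^ n)⁻¹ * ∑ p, |‖pauliCoeff (proj u) p‖ ^ 2 - ‖pauliCoeff (proj v) p‖ ^ 2|
      ≤ (2 * 2 ^ n)⁻¹ * (2 * (2 ^ n * √(1 - (‖star u ⬝ᵥ v‖ ^ 2) ^ 2))) := by gcongr
    _ = √(1 - (‖star u ⬝ᵥ v‖ ^ 2) ^ 2) := by field_simp

end PauliDistribution

lemma sqrt_one_sub_sq_le_two_mul_sqrt_one_sub {t : ℝ} (ht : t ≤ 1) :
    √(1 - t ^ 2) ≤ 2 * √(1 - t) := by
  rw [show 2 * √(1 - t) = √(2 ^ 2 * (1 - t)) by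
    rw [Real.sqrt_mul (by positivity), Real.sqrt_sq zero_le_two]]
  exact Real.sqrt_le_sqrt (by nlinarith)

/-- TV(Ξ_ψ, Ξ_φ) ≤ (1/2)‖ψ^{⊗2}−φ^{⊗2}‖₁ ≤ ‖ψ−φ‖₁ for pure states. -/
theorem tvXi_le_traceNorm {n : ℕ} (u v : (Fin n → ZMod 2) → ℂ)
    (hu : ∑ x, Complex.normSq (u x) = 1) (hv : ∑ x, Complex.normSq (v x) = 1) :
    tvXi (proj u) (proj v) ≤ (1 / 2) * traceNorm (tensorPow (proj u) 2 - tensorPow (proj v) 2) ∧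
    (1 / 2) * traceNorm (tensorPow (proj u) 2 - tensorPow (proj v) 2)
      ≤ traceNorm (proj u - proj v) := by
  have hunit : ∀ w : (Fin n → ZMod 2) → ℂ, ∑ x, Complex.normSq (w x) = 1 → star w ⬝ᵥ w = 1 :=
    fun w hw => by
      rw [dotProduct_comm, dotProduct_star_self_eq_sum_norm_sq]
      simp [← Complex.normSq_eq_norm_sq, hw]
  have hu' := hunit u hu
  have hv' := hunit v hv
  set t := ‖star u ⬝ᵥ v‖ ^ 2
  have ht : t ≤ 1 := pow_le_one₀ (norm_nonneg _) (norm_star_dotProduct_le_one hu' hv')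
  have htensor : traceNorm (tensorPow (proj u) 2 - tensorPow (proj v) 2) = 2 * √(1 - t ^ 2) := by
    rw [tensorPow_proj, tensorPow_proj, traceNorm_proj_sub_proj
      (by rw [star_vecTensorPow_dotProduct, hu', one_pow])
      (by rw [star_vecTensorPow_dotProduct, hv', one_pow]),
      star_vecTensorPow_dotProduct, norm_pow, ← pow_mul, pow_mul']
  rw [htensor, traceNorm_proj_sub_proj hu' hv', one_div, inv_mul_cancel_left₀ two_ne_zero]
  exact ⟨tvXi_proj_le hu' hv', sqrt_one_sub_sq_le_two_mul_sqrt_one_sub ht⟩
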